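/- Fix a field k, a finite quiver (I, A, s, t) and a dimension vector α : I → ℕ, and let X = (X_a)_{a∈A} be a representation of dimension vector α, i.e. X_a ∈ Mat_{α(t a) × α(s a)}(k). Define Φ : ⊕_{a∈A} Mat_{α(s a) × α(t a)}(k) → ⊕_{i∈I} Mat_{α(i) × α(i)}(k) by Φ((Y_a)_a)_i = ∑_{a : t a = i} X_a·Y_a − ∑_{a : s a = i} Y_a·X_a. Then a family (h_i)_{i∈I} lies in the image of Φ if and only if ∑_{i∈I} tr(g_i·h_i) = 0 for every (g_i)_{i∈I} ∈ End(X); that is, the image of Φ equals the orthogonal complement of End(X) with respect to the trace pairing ((g_i),(h_i)) ↦ ∑_{i∈I} tr(g_i·h_i). -/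
import Mathlib

open LinearMap Matrix

section Aux

variable {k : Type*} [Field k] {ι : Type*} [Fintype ι] {d e : ι → ℕ}

noncomputable def matPiPairing (k : Type*) [Field k] {ι : Type*} [Fintype ι] (d e : ι → ℕ) :
    (∀ x, Matrix (Fin (d x)) (Fin (e x)) k) →ₗ[k]
      Module.Dual k (∀ x, Matrix (Fin (e x)) (Fin (d x)) k) :=
  LinearMap.mk₂ k (fun Y Z => ∑ x, ((Y x) * (Z x)).trace)
    (by intro Y Y' Z; simp [Matrix.add_mul, Matrix.trace_add, Finset.sum_add_distrib])
    (by intro c Y Z; simp [Matrix.smul_mul, Finset.mul_sum])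
    (by intro Y Z Z'; simp [Matrix.mul_add, Matrix.trace_add, Finset.sum_add_distrib])
    (by intro c Y Z; simp [Matrix.mul_smul, Finset.mul_sum])

@[simp] lemma matPiPairing_apply (Y : ∀ x, Matrix (Fin (d x)) (Fin (e x)) k)
    (Z : ∀ x, Matrix (Fin (e x)) (Fin (d x)) k) :
    matPiPairing k d e Y Z = ∑ x, ((Y x) * (Z x)).trace := rfl

lemma matPiPairing_injective : Function.Injective (matPiPairing k d e) := by
  classical
  rw [← LinearMap.ker_eq_bot, Submodule.eq_bot_iff]
  intro Y hY
  rw [LinearMap.mem_ker] at hY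
  have hY' : ∀ Z : ∀ x, Matrix (Fin (e x)) (Fin (d x)) k,
      ∑ x, ((Y x) * (Z x)).trace = 0 := fun Z => by
    simpa using LinearMap.congr_fun hY Z
  funext x
  ext p q
  have := hY' (Pi.single x (Matrix.single q p (1 : k)))
  rw [Finset.sum_eq_single x] at this
  · simpa [Matrix.trace, Matrix.mul_apply, Matrix.single, Matrix.diag,
      Finset.sum_ite_eq, ite_and] using this
  · intro b _ hb
    simp [Pi.single_eq_of_ne hb]
  · simp

lemma matPiPairing_surjective : Function.Surjective (matPiPairing k d e) := by
  refine (LinearMap.injective_iff_surjective_of_finrank_eq_finrank ?_).mp matPiPairing_injective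
  rw [Subspace.dual_finrank_eq]
  simp [Module.finrank_pi_fintype, Module.finrank_matrix, mul_comm]

end Aux

def quiverPhi {k I A : Type*} [Field k] [Fintype A] [DecidableEq I]
    (s t : A → I) (α : I → ℕ)
    (X : ∀ a : A, Matrix (Fin (α (t a))) (Fin (α (s a))) k)
    (Y : ∀ a : A, Matrix (Fin (α (s a))) (Fin (α (t a))) k) :
    ∀ i : I, Matrix (Fin (α i)) (Fin (α i)) k :=
  (∑ a : A, Pi.single (t a) (X a * Y a)) - ∑ a : A, Pi.single (s a) (Y a * X a)

section Main

variable {k I A : Type*} [Field k] [Fintype I] [Fintype A] [DecidableEq I]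
    (s t : A → I) (α : I → ℕ)
    (X : ∀ a : A, Matrix (Fin (α (t a))) (Fin (α (s a))) k)

/-- `quiverPhi` as a linear map. -/
def quiverPhiₗ :
    (∀ a : A, Matrix (Fin (α (s a))) (Fin (α (t a))) k) →ₗ[k]
      (∀ i : I, Matrix (Fin (α i)) (Fin (α i)) k) where
  toFun := quiverPhi s t α X
  map_add' Y Z := by
    simp only [quiverPhi, Pi.add_apply, Matrix.mul_add, Matrix.add_mul, Pi.single_add,
      Finset.sum_add_distrib]
    abel
  map_smul' c Y := by
    simp only [quiverPhi, Pi.smul_apply, Matrix.mul_smul, Matrix.smul_mul, Pi.single_smul,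
      ← Finset.smul_sum, RingHom.id_apply, smul_sub]

/-- The adjoint map `Ψ`. -/
def quiverPsi :
    (∀ i : I, Matrix (Fin (α i)) (Fin (α i)) k) →ₗ[k]
      (∀ a : A, Matrix (Fin (α (t a))) (Fin (α (s a))) k) where
  toFun g := fun a => g (t a) * X a - X a * g (s a)
  map_add' g g' := by
    funext a
    simp [Matrix.add_mul, Matrix.mul_add]
    abel
  map_smul' c g := by
    funext a
    simp [Matrix.smul_mul, Matrix.mul_smul, smul_sub]

lemma sum_trace_single (j : I) (M : Matrix (Fin (α j)) (Fin (α j)) k)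
    (g : ∀ i : I, Matrix (Fin (α i)) (Fin (α i)) k) :
    ∑ i, ((Pi.single j M : ∀ i : I, Matrix (Fin (α i)) (Fin (α i)) k) i * g i).trace
      = (M * g j).trace := by
  rw [Finset.sum_eq_single j]
  · rw [Pi.single_eq_same]
  · intro i _ hi
    rw [Pi.single_eq_of_ne hi]
    simp
  · simp

lemma sum_trace_sum_single (j : A → I)
    (M : ∀ a : A, Matrix (Fin (α (j a))) (Fin (α (j a))) k)
    (g : ∀ i : I, Matrix (Fin (α i)) (Fin (α i)) k) :
    ∑ i, ((∑ a : A, Pi.single (j a) (M a) : ∀ i : I, Matrix (Fin (α i)) (Fin (α i)) k) i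
        * g i).trace = ∑ a : A, (M a * g (j a)).trace := by
  simp only [Finset.sum_apply, Matrix.sum_mul, Matrix.trace_sum]
  rw [Finset.sum_comm]
  exact Finset.sum_congr rfl fun a _ => sum_trace_single α (j a) (M a) g

lemma quiver_adjoint :
    (matPiPairing k α α).comp (quiverPhiₗ s t α X)
      = (quiverPsi s t α X).dualMap.comp
          (matPiPairing k (fun a => α (s a)) (fun a => α (t a))) := by
  refine LinearMap.ext fun Y => LinearMap.ext fun g => ?_
  show ∑ i, ((quiverPhi s t α X Y) i * g i).trace
      = ∑ a : A, (Y a * (quiverPsi s t α X g) a).trace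
  simp only [quiverPhi, Pi.sub_apply, Matrix.sub_mul, Matrix.trace_sub,
    Finset.sum_sub_distrib]
  rw [sum_trace_sum_single α t (fun a => X a * Y a) g,
    sum_trace_sum_single α s (fun a => Y a * X a) g,
    ← Finset.sum_sub_distrib]
  refine Finset.sum_congr rfl fun a _ => ?_
  show (X a * Y a * g (t a)).trace - (Y a * X a * g (s a)).trace
      = (Y a * (g (t a) * X a - X a * g (s a))).trace
  rw [Matrix.mul_sub, Matrix.trace_sub, ← Matrix.mul_assoc,
    Matrix.trace_mul_cycle (Y a) (g (t a)) (X a), Matrix.mul_assoc, Matrix.mul_assoc]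

end Main

/-- A family `(h_i)_{i∈I}` lies in the image of `Φ` if and only if
`∑_{i∈I} tr(g_i·h_i) = 0` for every endomorphism `(g_i)_{i∈I}` of the representation
`X`; i.e. the image of `Φ` is the trace-pairing orthogonal complement of `End(X)`. -/
theorem quiverPhi_mem_range_iff_trace_orthogonal_to_End
    {k I A : Type*} [Field k] [Fintype I] [Fintype A] [DecidableEq I]
    (s t : A → I) (α : I → ℕ)
    (X : ∀ a : A, Matrix (Fin (α (t a))) (Fin (α (s a))) k)
    (h : ∀ i : I, Matrix (Fin (α i)) (Fin (α i)) k) :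
    (∃ Y : ∀ a : A, Matrix (Fin (α (s a))) (Fin (α (t a))) k,
        quiverPhi s t α X Y = h) ↔
      ∀ g : ∀ i : I, Matrix (Fin (α i)) (Fin (α i)) k,
        (∀ a : A, g (t a) * X a = X a * g (s a)) →
          ∑ i : I, Matrix.trace (g i * h i) = 0 := by
  classical
  set f := quiverPhiₗ s t α X
  set Ψ := quiverPsi s t α X
  set eW := matPiPairing k α α
  have hmap : Submodule.map eW (LinearMap.range f)
      = (LinearMap.ker Ψ).dualAnnihilator := by
    rw [← LinearMap.range_comp, quiver_adjoint, LinearMap.range_comp,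
      LinearMap.range_eq_top.mpr matPiPairing_surjective, Submodule.map_top,
      LinearMap.range_dualMap_eq_dualAnnihilator_ker]
  have hmem : (∃ Y, quiverPhi s t α X Y = h) ↔ h ∈ LinearMap.range f := Iff.rfl
  rw [hmem]
  have h1 : h ∈ LinearMap.range f ↔ eW h ∈ (LinearMap.ker Ψ).dualAnnihilator := by
    rw [← hmap]
    constructor
    · exact fun hh => Submodule.mem_map_of_mem hh
    · rintro ⟨y, hy, hy2⟩
      rwa [← matPiPairing_injective hy2]
  rw [h1, Submodule.mem_dualAnnihilator]
  constructor
  · intro hh g hg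
    have hgker : g ∈ LinearMap.ker Ψ := by
      rw [LinearMap.mem_ker]
      funext a
      exact sub_eq_zero.mpr (hg a)
    have := hh g hgker
    rw [matPiPairing_apply] at this
    rw [← this]
    exact Finset.sum_congr rfl fun i _ => Matrix.trace_mul_comm (g i) (h i)
  · intro hh g hg
    rw [LinearMap.mem_ker] at hg
    have hg' : ∀ a : A, g (t a) * X a = X a * g (s a) := fun a =>
      sub_eq_zero.mp (congrFun hg a)
    rw [matPiPairing_apply, ← hh g hg']
    exact Finset.sum_congr rfl fun i _ => Matrix.trace_mul_comm (h i) (g i)
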